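/- arXiv:1708.06897 — 5 statements merged into one kernel-verified Lean document; each statement's English description precedes it below -/
import Mathlib

section
/- Fix an integer p ≥ 1. Then the limit as k → ∞ of the sum, over all multi-indices α ∈ ℕ^p with |α| = k, of the reciprocal multinomial coefficients 1/C^k_α = (α_1! ⋯ α_p!)/k! equals p; that is, lim_{k→∞} ∑_{α ∈ ℕ^p, |α| = k} (α_1! ⋯ α_p!)/k! = p. -/
/-! Write `S p k` for the sum. Splitting off the first coordinate of `α` gives
`S (p + 1) k = ∑_{i ≤ k} S p (k - i) / C(k, i)`. The terms `i = 0` and `i = k` contribute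
`S p k` and `1`; the remaining ones are at most `sup S p` times `∑_{0 < i < k} 1 / C(k, i)`,
which is `O(1 / k)` because `C(k, i) ≥ C(k, 2)` for `2 ≤ i ≤ k - 2`. Induction on `p`, starting
from `S 0 k = 0` for `k ≥ 1`, gives the limit `p`. -/

open Finset Filter Topology

theorem Finset.Nat.sum_antidiagonalTuple_succ {M : Type*} [AddCommMonoid M] (k n : ℕ)
    (f : (Fin (k + 1) → ℕ) → M) :
    ∑ x ∈ antidiagonalTuple (k + 1) n, f x =
      ∑ ij ∈ antidiagonal n, ∑ y ∈ antidiagonalTuple k ij.2, f (Fin.cons ij.1 y) := by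
  simp only [Finset.sum, Finset.Nat.antidiagonalTuple, Multiset.Nat.antidiagonalTuple,
    List.Nat.antidiagonalTuple]
  simp only [List.flatMap, Multiset.map_coe, List.map_flatten, List.map_map, Function.comp_def,
    Multiset.sum_coe, List.sum_flatten, sum_map_val]
  rfl

theorem Nat.choose_le_choose_of_le_of_le_half {n a b : ℕ} (hab : a ≤ b) (hb : b ≤ n / 2) :
    n.choose a ≤ n.choose b := by
  induction b, hab using Nat.le_induction with
  | base => rfl
  | succ b _ ih => exact (ih (by omega)).trans (Nat.choose_le_succ_of_lt_half_left (by omega))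

theorem Nat.choose_le_choose_of_le_of_le_sub {n a i : ℕ} (hai : a ≤ i) (hin : i ≤ n - a) :
    n.choose a ≤ n.choose i := by
  rcases le_or_gt i (n / 2) with hi | hi
  · exact Nat.choose_le_choose_of_le_of_le_half hai hi
  · rw [← Nat.choose_symm (by omega : i ≤ n)]
    exact Nat.choose_le_choose_of_le_of_le_half (by omega) (by omega)

theorem inv_choose_le_inv_choose {n a i : ℕ} (han : a ≤ n) (hai : a ≤ i) (hin : i ≤ n - a) :
    (n.choose i : ℝ)⁻¹ ≤ (n.choose a : ℝ)⁻¹ :=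
  inv_anti₀ (by exact_mod_cast Nat.choose_pos han)
    (by exact_mod_cast Nat.choose_le_choose_of_le_of_le_sub hai hin)

theorem sum_Ioo_inv_choose_le (n : ℕ) : ∑ i ∈ Ioo 0 n, (n.choose i : ℝ)⁻¹ ≤ 4 / n := by
  rcases Nat.lt_or_ge n 2 with hn | hn
  · refine (sum_eq_zero fun i hi => ?_).trans_le (by positivity)
    simp only [mem_Ioo] at hi
    omega
  set edge : ℕ → Prop := fun i => i = 1 ∨ i = n - 1
  have hedge : ∑ i ∈ Ioo 0 n with edge i, (n.choose i : ℝ)⁻¹ ≤ 2 / n := by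
    calc ∑ i ∈ Ioo 0 n with edge i, (n.choose i : ℝ)⁻¹
        ≤ #{i ∈ Ioo 0 n | edge i} • (n.choose 1 : ℝ)⁻¹ := by
          refine sum_le_card_nsmul _ _ _ fun i hi => ?_
          simp only [mem_filter, mem_Ioo] at hi
          exact inv_choose_le_inv_choose (by omega) (by omega) (by omega)
      _ ≤ 2 • (n.choose 1 : ℝ)⁻¹ := by
          refine nsmul_le_nsmul_left (by positivity) ?_
          exact (card_le_card (t := {1, n - 1}) fun i hi => by simp_all [edge]).trans card_le_two
      _ = 2 / n := by simp [div_eq_mul_inv]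
  have hinner : ∑ i ∈ Ioo 0 n with ¬edge i, (n.choose i : ℝ)⁻¹ ≤ 2 / n := by
    calc ∑ i ∈ Ioo 0 n with ¬edge i, (n.choose i : ℝ)⁻¹
        ≤ #{i ∈ Ioo 0 n | ¬edge i} • (n.choose 2 : ℝ)⁻¹ := by
          refine sum_le_card_nsmul _ _ _ fun i hi => ?_
          simp only [mem_filter, mem_Ioo, edge] at hi
          exact inv_choose_le_inv_choose (by omega) (by omega) (by omega)
      _ ≤ (n - 1 : ℝ) * (n.choose 2 : ℝ)⁻¹ := by
          rw [nsmul_eq_mul]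
          gcongr
          calc (#{i ∈ Ioo 0 n | ¬edge i} : ℝ) ≤ #(Ioo 0 n) := by
                exact_mod_cast card_filter_le _ _
            _ = n - 1 := by simp [Nat.card_Ioo, Nat.cast_sub (by omega : 1 ≤ n)]
      _ = 2 / n := by
          have : (n : ℝ) - 1 ≠ 0 := sub_ne_zero.mpr (by exact_mod_cast (by omega : n ≠ 1))
          rw [Nat.cast_choose_two]
          field_simp
  calc _ = ∑ i ∈ Ioo 0 n with edge i, (n.choose i : ℝ)⁻¹ +
        ∑ i ∈ Ioo 0 n with ¬edge i, (n.choose i : ℝ)⁻¹ := (sum_filter_add_sum_filter_not _ _ _).symm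
    _ ≤ 2 / n + 2 / n := add_le_add hedge hinner
    _ = 4 / n := by ring

theorem tendsto_sum_Ioo_inv_choose :
    Tendsto (fun n : ℕ => ∑ i ∈ Ioo 0 n, (n.choose i : ℝ)⁻¹) atTop (𝓝 0) :=
  squeeze_zero (fun n => by positivity) sum_Ioo_inv_choose_le
    (tendsto_const_div_atTop_nhds_zero_nat 4)

noncomputable def recipMultinomialSum (p k : ℕ) : ℝ :=
  ∑ α ∈ Finset.Nat.antidiagonalTuple p k, (∏ l, ((α l).factorial : ℝ)) / (k.factorial : ℝ)

theorem recipMultinomialSum_nonneg (p k : ℕ) : 0 ≤ recipMultinomialSum p k := by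
  unfold recipMultinomialSum; positivity

theorem recipMultinomialSum_zero_succ (k : ℕ) : recipMultinomialSum 0 (k + 1) = 0 := by
  simp [recipMultinomialSum]

theorem recipMultinomialSum_zero_right (p : ℕ) : recipMultinomialSum p 0 = 1 := by
  simp [recipMultinomialSum, Finset.Nat.antidiagonalTuple_zero_right]

theorem recipMultinomialSum_succ (p k : ℕ) : recipMultinomialSum (p + 1) k =
    ∑ i ∈ range (k + 1), (k.choose i : ℝ)⁻¹ * recipMultinomialSum p (k - i) := by
  rw [recipMultinomialSum, Finset.Nat.sum_antidiagonalTuple_succ,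
    Finset.Nat.sum_antidiagonal_eq_sum_range_succ_mk]
  refine sum_congr rfl fun i hi => ?_
  have hik : i ≤ k := Nat.lt_succ_iff.mp (mem_range.mp hi)
  have hfact : (k.choose i : ℝ) * i.factorial * (k - i).factorial = k.factorial := by
    exact_mod_cast Nat.choose_mul_factorial_mul_factorial hik
  rw [recipMultinomialSum, mul_sum]
  refine sum_congr rfl fun α _ => ?_
  rw [Fin.prod_univ_succ]
  simp only [Fin.cons_zero, Fin.cons_succ]
  rw [← hfact]
  have : (k.choose i : ℝ) ≠ 0 := by exact_mod_cast (Nat.choose_pos hik).ne'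
  field_simp

theorem recipMultinomialSum_succ_eq_add (p k : ℕ) (hk : 1 ≤ k) : recipMultinomialSum (p + 1) k =
    recipMultinomialSum p k + 1 +
      ∑ i ∈ Ioo 0 k, (k.choose i : ℝ)⁻¹ * recipMultinomialSum p (k - i) := by
  rw [recipMultinomialSum_succ, sum_range_succ, range_eq_Ico, sum_eq_sum_Ico_succ_bot hk,
    Ico_add_one_left_eq_Ioo]
  simp only [Nat.choose_zero_right, Nat.choose_self, Nat.cast_one, inv_one, one_mul, mul_one,
    tsub_zero, tsub_self, recipMultinomialSum_zero_right]
  ring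

theorem tendsto_recipMultinomialSum (p : ℕ) : Tendsto (recipMultinomialSum p) atTop (𝓝 p) := by
  induction p with
  | zero =>
    refine tendsto_const_nhds.congr' ?_
    filter_upwards [eventually_ge_atTop 1] with k hk
    obtain ⟨k, rfl⟩ := Nat.exists_eq_add_of_le' hk
    simp [recipMultinomialSum_zero_succ]
  | succ p ih =>
    obtain ⟨B, hB⟩ := ih.bddAbove_range
    have hmid : Tendsto (fun k => ∑ i ∈ Ioo 0 k,
        (k.choose i : ℝ)⁻¹ * recipMultinomialSum p (k - i)) atTop (𝓝 0) := by
      refine squeeze_zero (fun k => ?_) (fun k => ?_)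
        (by simpa using tendsto_sum_Ioo_inv_choose.mul_const B)
      · exact sum_nonneg fun i _ => mul_nonneg (by positivity) (recipMultinomialSum_nonneg p _)
      · rw [sum_mul]
        exact sum_le_sum fun i _ =>
          mul_le_mul_of_nonneg_left (hB ⟨_, rfl⟩) (by positivity)
    have hlim := (ih.add_const 1).add hmid
    rw [add_zero, ← Nat.cast_succ] at hlim
    refine hlim.congr' ?_
    filter_upwards [eventually_ge_atTop 1] with k hk
    exact (recipMultinomialSum_succ_eq_add p k hk).symm

theorem recip_multinomial_sum_limit_general (p : ℕ) :
    Filter.Tendsto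
      (fun k : ℕ =>
        ∑ α ∈ Finset.Nat.antidiagonalTuple p k,
          (∏ l, ((α l).factorial : ℝ)) / (k.factorial : ℝ))
      Filter.atTop (nhds (p : ℝ)) :=
  tendsto_recipMultinomialSum p

/-- **Limit of reciprocal multinomial coefficients.**
For fixed `p ≥ 1`, `lim_{k→∞} ∑_{α ∈ ℕ^p, |α| = k} 1/C^k_α = p`, where
`C^k_α = k!/(α₁!⋯α_p!)` is the multinomial coefficient. -/
theorem recip_multinomial_sum_limit (p : ℕ) (hp : 1 ≤ p) :
    Filter.Tendsto
      (fun k : ℕ =>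
        ∑ α ∈ Finset.Nat.antidiagonalTuple p k,
          (∏ l, ((α l).factorial : ℝ)) / (k.factorial : ℝ))
      Filter.atTop (nhds (p : ℝ)) :=
  recip_multinomial_sum_limit_general p
end

section
/- Fix an integer p ≥ 1. Then the sum over all multi-indices α ∈ ℕ^p with |α| = k and max_l α_l ≤ k − p of the reciprocal multinomial coefficients 1/C^k_α = (α_1! ⋯ α_p!)/k! tends to 0 as k → ∞; that is, lim_{k→∞} ∑_{α ∈ ℕ^p, |α| = k, α_l ≤ k−p for all l} (α_1! ⋯ α_p!)/k! = 0. -/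
open Finset Nat Filter

lemma fact_aux (p : ℕ) : ∀ c, p ≤ c → ∀ d, c ≤ d → c ! * d ! ≤ p ! * (c + d - p)! := by
  intro c hc
  induction c, hc using Nat.le_induction with
  | base =>
    intro d _
    have : p + d - p = d := by omega
    rw [this]
  | succ c hc ih =>
    intro d hd
    have h1 : (c + 1)! * d ! ≤ c ! * (d + 1)! := by
      rw [Nat.factorial_succ, Nat.factorial_succ]
      calc (c + 1) * c ! * d ! = (c + 1) * (c ! * d !) := by ring
        _ ≤ (d + 1) * (c ! * d !) := Nat.mul_le_mul_right _ (by omega)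
        _ = c ! * ((d + 1) * d !) := by ring
    calc (c + 1)! * d ! ≤ c ! * (d + 1)! := h1
      _ ≤ p ! * (c + (d + 1) - p)! := ih (d + 1) (by omega)
      _ = p ! * (c + 1 + d - p)! := by congr 2; omega

lemma term_bound (p k : ℕ) (hp : 1 ≤ p) (hk : p * p ≤ k) (α : Fin p → ℕ)
    (hsum : ∑ l, α l = k) (hle : ∀ l, α l ≤ k - p) :
    ∏ l, (α l)! ≤ p ! * (k - p)! := by
  haveI : NeZero p := ⟨by omega⟩
  obtain ⟨l₀, -, hmax⟩ := Finset.exists_max_image Finset.univ α Finset.univ_nonempty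
  set m := α l₀ with hm
  have hpk : p ≤ k := le_trans (Nat.le_mul_of_pos_left p (by omega)) hk
  have hkpm : k ≤ p * m := by
    calc k = ∑ l, α l := hsum.symm
      _ ≤ Finset.univ.card • m := Finset.sum_le_card_nsmul _ _ _ (fun x _ => hmax x (Finset.mem_univ x))
      _ = p * m := by simp [mul_comm]
  have hpm : p ≤ m := Nat.le_of_mul_le_mul_left (le_trans hk hkpm) (by omega)
  have hmk : m + p ≤ k := by have := hle l₀; omega
  have hsplit : ∏ l, (α l)! = m ! * ∏ l ∈ Finset.univ.erase l₀, (α l)! := by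
    rw [← Finset.mul_prod_erase Finset.univ _ (Finset.mem_univ l₀)]
  have hsum' : ∑ l ∈ Finset.univ.erase l₀, α l = k - m := by
    have := Finset.sum_erase_add Finset.univ α (Finset.mem_univ l₀)
    omega
  have h2 : ∏ l ∈ Finset.univ.erase l₀, (α l)! ≤ (k - m)! := by
    rw [← hsum']
    exact Nat.le_of_dvd (Nat.factorial_pos _) (Nat.prod_factorial_dvd_factorial_sum _ _)
  rw [hsplit]
  have h3 : m ! * (k - m)! ≤ p ! * (k - p)! := by
    rcases le_total m (k - m) with h | h
    · have := fact_aux p m hpm (k - m) h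
      have he : m + (k - m) - p = k - p := by omega
      rwa [he] at this
    · have := fact_aux p (k - m) (by omega) m h
      have he : k - m + m - p = k - p := by omega
      rw [he] at this
      rwa [mul_comm] at this
  calc m ! * ∏ l ∈ Finset.univ.erase l₀, (α l)! ≤ m ! * (k - m)! :=
        Nat.mul_le_mul_left _ h2
    _ ≤ p ! * (k - p)! := h3

lemma card_bound (q k : ℕ) :
    (Finset.Nat.antidiagonalTuple (q + 1) k).card ≤ (k + 1) ^ q := by
  have : ((Finset.univ : Finset (Fin q → Fin (k + 1)))).card = (k + 1) ^ q := by
    simp [Fintype.card_fun]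
  rw [← this]
  apply Finset.card_le_card_of_injOn (fun α i => (⟨min (α i.succ) k, by omega⟩ : Fin (k + 1)))
  · intro α _; exact Finset.mem_univ _
  · intro α hα β hβ hfab
    simp only [Finset.mem_coe, Finset.Nat.mem_antidiagonalTuple] at hα hβ
    have hb : ∀ (γ : Fin (q+1) → ℕ), (∑ l, γ l = k) → ∀ l, γ l ≤ k := by
      intro γ hγ l
      rw [← hγ]
      exact Finset.single_le_sum (fun i _ => Nat.zero_le _) (Finset.mem_univ l)
    have htail : ∀ i : Fin q, α i.succ = β i.succ := by
      intro i
      have := congrFun hfab i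
      have h1 : min (α i.succ) k = α i.succ := min_eq_left (hb α hα _)
      have h2 : min (β i.succ) k = β i.succ := min_eq_left (hb β hβ _)
      have hv : α i.succ ⊓ k = β i.succ ⊓ k := congrArg Fin.val this
      rw [h1, h2] at hv
      exact hv
    have hsum : ∑ i : Fin q, α i.succ = ∑ i : Fin q, β i.succ :=
      Finset.sum_congr rfl (fun i _ => htail i)
    have h0 : α 0 = β 0 := by
      have ha := hα; have hbb := hβ
      rw [Fin.sum_univ_succ] at ha hbb
      omega
    funext l
    induction l using Fin.cases with
    | zero => exact h0
    | succ i => exact htail i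

lemma key_ineq (q k : ℕ) (hk : 3 * (q + 1) ≤ k) :
    (k + 1) ^ q * ((q + 1)! * (k - (q + 1))!) * (k + 1 - (q + 1)) ≤
      2 ^ q * (q + 1)! * k ! := by
  have hpk : q + 1 ≤ k := by omega
  have h1 : (k + 1) ^ q ≤ 2 ^ q * (k + 1 - (q + 1)) ^ q := by
    rw [← mul_pow]
    exact Nat.pow_le_pow_left (by omega) q
  have h2 : (k + 1 - (q + 1)) ^ (q + 1) ≤ k.descFactorial (q + 1) :=
    Nat.pow_sub_le_descFactorial k (q + 1)
  have h3 : k.descFactorial (q + 1) * (k - (q + 1))! = k ! := by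
    rw [Nat.descFactorial_eq_factorial_mul_choose, mul_comm ((q + 1)!) (k.choose (q + 1))]
    exact Nat.choose_mul_factorial_mul_factorial hpk
  calc (k + 1) ^ q * ((q + 1)! * (k - (q + 1))!) * (k + 1 - (q + 1))
      ≤ 2 ^ q * (k + 1 - (q + 1)) ^ q * ((q + 1)! * (k - (q + 1))!) * (k + 1 - (q + 1)) := by
        exact Nat.mul_le_mul_right _ (Nat.mul_le_mul_right _ h1)
    _ = 2 ^ q * (q + 1)! * ((k + 1 - (q + 1)) ^ (q + 1) * (k - (q + 1))!) := by
        rw [pow_succ]; ring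
    _ ≤ 2 ^ q * (q + 1)! * (k.descFactorial (q + 1) * (k - (q + 1))!) := by
        exact Nat.mul_le_mul_left _ (Nat.mul_le_mul_right _ h2)
    _ = 2 ^ q * (q + 1)! * k ! := by rw [h3]



/-- **Vanishing of the truncated reciprocal-multinomial sum.**
For fixed `p ≥ 1`, the sum over multi-indices `α ∈ ℕ^p` with `|α| = k` and
`max_l α_l ≤ k - p` of `1/C^k_α = (α₁!⋯α_p!)/k!` tends to `0` as `k → ∞`. -/
theorem recip_multinomial_truncated_sum_limit (p : ℕ) (hp : 1 ≤ p) :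
    Filter.Tendsto
      (fun k : ℕ =>
        ∑ α ∈ (Finset.Nat.antidiagonalTuple p k).filter (fun α => ∀ l, α l ≤ k - p),
          (∏ l, ((α l).factorial : ℝ)) / (k.factorial : ℝ))
      Filter.atTop (nhds (0 : ℝ)) := by
  obtain ⟨q, rfl⟩ : ∃ q, p = q + 1 := ⟨p - 1, by omega⟩
  apply squeeze_zero' (g := fun k : ℕ =>
    ((2 ^ q * (q + 1)! : ℕ) : ℝ) / ((k + 1 - (q + 1) : ℕ) : ℝ))
  · filter_upwards with k
    apply Finset.sum_nonneg
    intro α _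
    positivity
  · filter_upwards [Filter.eventually_ge_atTop ((q + 1) * (q + 1) + 3 * (q + 1))] with k hk
    have hpp : (q + 1) * (q + 1) ≤ k := by omega
    have h3p : 3 * (q + 1) ≤ k := by omega
    set B : ℝ := (((q + 1)! * (k - (q + 1))! : ℕ) : ℝ) / (k ! : ℝ) with hB
    have hterm : ∀ α ∈ (Finset.Nat.antidiagonalTuple (q + 1) k).filter
        (fun α => ∀ l, α l ≤ k - (q + 1)),
        (∏ l, ((α l).factorial : ℝ)) / (k.factorial : ℝ) ≤ B := by
      intro α hα
      rw [Finset.mem_filter, Finset.Nat.mem_antidiagonalTuple] at hα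
      have hnat := term_bound (q + 1) k (by omega) hpp α hα.1 hα.2
      rw [hB]
      gcongr
      exact_mod_cast hnat
    have hS := Finset.sum_le_card_nsmul _ _ B hterm
    have hcard : ((Finset.Nat.antidiagonalTuple (q + 1) k).filter
        (fun α => ∀ l, α l ≤ k - (q + 1))).card ≤ (k + 1) ^ q :=
      le_trans (Finset.card_le_card (Finset.filter_subset _ _)) (card_bound q k)
    have hBpos : 0 ≤ B := by positivity
    have hdpos : (0 : ℝ) < ((k + 1 - (q + 1) : ℕ) : ℝ) := by
      have h' : 0 < k + 1 - (q + 1) := by clear hterm hS hcard; omega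
      exact_mod_cast h'
    calc ∑ α ∈ (Finset.Nat.antidiagonalTuple (q + 1) k).filter
          (fun α => ∀ l, α l ≤ k - (q + 1)),
          (∏ l, ((α l).factorial : ℝ)) / (k.factorial : ℝ)
        ≤ ((Finset.Nat.antidiagonalTuple (q + 1) k).filter
          (fun α => ∀ l, α l ≤ k - (q + 1))).card • B := hS
      _ = (((Finset.Nat.antidiagonalTuple (q + 1) k).filter
          (fun α => ∀ l, α l ≤ k - (q + 1))).card : ℝ) * B := by
          rw [nsmul_eq_mul]
      _ ≤ (((k + 1) ^ q : ℕ) : ℝ) * B := by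
          apply mul_le_mul_of_nonneg_right _ hBpos
          exact_mod_cast hcard
      _ ≤ ((2 ^ q * (q + 1)! : ℕ) : ℝ) / ((k + 1 - (q + 1) : ℕ) : ℝ) := by
          rw [hB, mul_div_assoc', div_le_div_iff₀ (by positivity) hdpos]
          exact_mod_cast key_ineq q k h3p
  · apply Filter.Tendsto.div_atTop tendsto_const_nhds
    apply tendsto_natCast_atTop_atTop.comp
    exact (Filter.tendsto_sub_atTop_nat (q + 1)).comp (Filter.tendsto_add_atTop_nat 1)
end

section
/- Let θ = (θ_1, …, θ_p) with each θ_l ≥ 0. Then for all x, y ∈ ℝ^p, the anisotropic Gaussian kernel admits the absolutely convergent expansion γ_θ(x, y) = exp(−∑_{l=1}^p θ_l (x_l − y_l)²) = exp(−‖x‖²_θ) exp(−‖y‖²_θ) ∑_{k=0}^∞ (2^k/k!) ∑_{α ∈ ℕ^p, |α| = k} C^k_α θ^α x^α y^α. Equivalently, with φ_α(x) = ( 2^{|α|} C^{|α|}_α θ^α / |α|! )^{1/2} exp(−‖x‖²_θ) x^α, one has ∑_{α ∈ ℕ^p} φ_α(x)² < ∞ for every x ∈ ℝ^p and ∑_{α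 ∈ ℕ^p} φ_α(x) φ_α(y) = γ_θ(x, y) for all x, y ∈ ℝ^p. -/
open Finset

/-- The anisotropic Gaussian kernel `γ_θ(x,y) = exp(-∑_l θ_l (x_l - y_l)²)` on `ℝ^p`. -/
noncomputable def gaussKer {p : ℕ} (θ : Fin p → ℝ) (x y : Fin p → ℝ) : ℝ :=
  Real.exp (-∑ l, θ l * (x l - y l) ^ 2)

/-- The feature map
`φ_α(x) = √(2^{|α|} C^{|α|}_α θ^α / |α|!) · exp(-‖x‖²_θ) · x^α`,
where `C^k_α = k!/(α₁!⋯α_p!)` and `‖x‖²_θ = ∑_l θ_l x_l²`. -/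
noncomputable def phiFeat {p : ℕ} (θ : Fin p → ℝ) (α : Fin p → ℕ) (x : Fin p → ℝ) : ℝ :=
  Real.sqrt ((2 : ℝ) ^ (∑ l, α l) *
      (((∑ l, α l).factorial : ℝ) / ∏ l, ((α l).factorial : ℝ)) *
      (∏ l, θ l ^ α l) / ((∑ l, α l).factorial : ℝ)) *
    Real.exp (-∑ l, θ l * x l ^ 2) * ∏ l, x l ^ α l

lemma real_exp_tsum (t : ℝ) : ∑' n : ℕ, t ^ n / (n.factorial : ℝ) = Real.exp t := by
  rw [Real.exp_eq_exp_ℝ, NormedSpace.exp_eq_tsum_div]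

lemma fact_div_eq_multinomial {p : ℕ} (α : Fin p → ℕ) :
    ((∑ l, α l).factorial : ℝ) / ∏ l, ((α l).factorial : ℝ) =
      (Nat.multinomial Finset.univ α : ℝ) := by
  have h := Nat.multinomial_spec Finset.univ α
  have hprod : (0:ℝ) < ∏ l, ((α l).factorial : ℝ) := by positivity
  rw [div_eq_iff hprod.ne']
  rw [mul_comm]
  exact_mod_cast h.symm

lemma inner_sum_eq {p : ℕ} (a b c : Fin p → ℝ) (k : ℕ) :
    ∑ α ∈ Finset.Nat.antidiagonalTuple p k,
        ((k.factorial : ℝ) / ∏ l, ((α l).factorial : ℝ)) *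
          (∏ l, a l ^ α l) * (∏ l, b l ^ α l) * (∏ l, c l ^ α l)
      = (∑ l, a l * b l * c l) ^ k := by
  classical
  rw [← Finset.piAntidiag_univ_fin_eq_antidiagonalTuple k p,
    Finset.sum_pow_eq_sum_piAntidiag univ (fun l => a l * b l * c l) k]
  refine Finset.sum_congr rfl fun α hα => ?_
  obtain ⟨hsum, -⟩ := Finset.mem_piAntidiag.mp hα
  subst hsum
  rw [fact_div_eq_multinomial]
  simp [mul_pow, Finset.prod_mul_distrib]
  ring

/-- coefficient `c_α = 2^{|α|} C^{|α|}_α θ^α / |α|!`. -/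
noncomputable def cAlpha {p : ℕ} (θ : Fin p → ℝ) (α : Fin p → ℕ) : ℝ :=
  (2 : ℝ) ^ (∑ l, α l) *
      (((∑ l, α l).factorial : ℝ) / ∏ l, ((α l).factorial : ℝ)) *
      (∏ l, θ l ^ α l) / ((∑ l, α l).factorial : ℝ)

lemma cAlpha_nonneg {p : ℕ} {θ : Fin p → ℝ} (hθ : ∀ l, 0 ≤ θ l) (α : Fin p → ℕ) :
    0 ≤ cAlpha θ α := by
  have h1 : (0:ℝ) ≤ ∏ l, θ l ^ α l :=
    Finset.prod_nonneg fun l _ => pow_nonneg (hθ l) _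
  unfold cAlpha
  positivity

/-- fiber sum of `c_α a^α b^α` over `|α| = k`. -/
lemma fiber_sum_eq {p : ℕ} (θ a b : Fin p → ℝ) (k : ℕ) :
    ∑ α ∈ Finset.Nat.antidiagonalTuple p k,
        cAlpha θ α * (∏ l, a l ^ α l) * (∏ l, b l ^ α l)
      = (2 * ∑ l, θ l * a l * b l) ^ k / (k.factorial : ℝ) := by
  classical
  have h : ∀ α ∈ Finset.Nat.antidiagonalTuple p k,
      cAlpha θ α * (∏ l, a l ^ α l) * (∏ l, b l ^ α l)
        = ((2:ℝ)^k / (k.factorial : ℝ)) *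
            (((k.factorial : ℝ) / ∏ l, ((α l).factorial : ℝ)) *
              (∏ l, θ l ^ α l) * (∏ l, a l ^ α l) * (∏ l, b l ^ α l)) := by
    intro α hα
    have hk : ∑ l, α l = k := Finset.Nat.mem_antidiagonalTuple.mp hα
    unfold cAlpha
    rw [hk]
    ring
  rw [Finset.sum_congr rfl h, ← Finset.mul_sum, inner_sum_eq, mul_pow]
  ring

lemma summable_G {p : ℕ} {θ : Fin p → ℝ} (hθ : ∀ l, 0 ≤ θ l) (a b : Fin p → ℝ) :
    Summable (fun α : Fin p → ℕ => cAlpha θ α * (∏ l, a l ^ α l) * (∏ l, b l ^ α l))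
    ∧ (∑' α : Fin p → ℕ, cAlpha θ α * (∏ l, a l ^ α l) * (∏ l, b l ^ α l))
        = Real.exp (2 * ∑ l, θ l * a l * b l) := by
  classical
  set G : (Fin p → ℕ) → ℝ :=
    fun α => cAlpha θ α * (∏ l, a l ^ α l) * (∏ l, b l ^ α l) with hG
  have habs_eq : ∀ α : Fin p → ℕ,
      |G α| = cAlpha θ α * (∏ l, |a l| ^ α l) * (∏ l, |b l| ^ α l) := by
    intro α
    rw [hG]
    rw [abs_mul, abs_mul, abs_of_nonneg (cAlpha_nonneg hθ α), Finset.abs_prod,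
      Finset.abs_prod]
    simp [abs_pow]
  have e := Finset.Nat.sigmaAntidiagonalTupleEquivTuple p
  have hsig : Summable (fun s : Σ n, Finset.Nat.antidiagonalTuple p n => |G s.2|) := by
    rw [summable_sigma_of_nonneg (fun _ => abs_nonneg _)]
    constructor
    · intro n; exact Summable.of_finite
    · have : ∀ n : ℕ, (∑' α : Finset.Nat.antidiagonalTuple p n, |G α.1|)
          = (2 * ∑ l, θ l * |a l| * |b l|) ^ n / (n.factorial : ℝ) := by
        intro n
        rw [Finset.tsum_subtype (Finset.Nat.antidiagonalTuple p n) (fun α => |G α|)]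
        rw [← fiber_sum_eq θ (fun l => |a l|) (fun l => |b l|) n]
        exact Finset.sum_congr rfl fun α _ => habs_eq α
      rw [summable_congr this]
      exact Real.summable_pow_div_factorial _
  have hsig2 : Summable (fun s : Σ n, Finset.Nat.antidiagonalTuple p n => G s.2) :=
    hsig.of_abs
  have hsum : Summable G := by
    rw [← (Finset.Nat.sigmaAntidiagonalTupleEquivTuple p).summable_iff]
    exact hsig2
  refine ⟨hsum, ?_⟩
  rw [← (Finset.Nat.sigmaAntidiagonalTupleEquivTuple p).tsum_eq G]
  have : ∀ s : Σ n, Finset.Nat.antidiagonalTuple p n,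
      G (Finset.Nat.sigmaAntidiagonalTupleEquivTuple p s) = G s.2 := fun _ => rfl
  rw [tsum_congr this, Summable.tsum_sigma' (fun n => Summable.of_finite) hsig2]
  have h2 : ∀ n : ℕ, (∑' α : Finset.Nat.antidiagonalTuple p n, G α.1)
      = (2 * ∑ l, θ l * a l * b l) ^ n / (n.factorial : ℝ) := by
    intro n
    rw [Finset.tsum_subtype (Finset.Nat.antidiagonalTuple p n) G]
    exact fiber_sum_eq θ a b n
  rw [tsum_congr h2, real_exp_tsum]

/-- **Expansion of the anisotropic Gaussian kernel.**
For `θ_l ≥ 0` and all `x, y ∈ ℝ^p`,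
`γ_θ(x,y) = exp(-‖x‖²_θ) exp(-‖y‖²_θ) ∑_{k=0}^∞ (2^k/k!) ∑_{|α|=k} C^k_α θ^α x^α y^α`
(with the `k`-indexed series summable); equivalently, with the feature maps `φ_α`,
`∑_α φ_α(x)² < ∞` for every `x` and `∑_α φ_α(x) φ_α(y) = γ_θ(x,y)`. -/
theorem gauss_kernel_expansion (p : ℕ) (θ : Fin p → ℝ) (hθ : ∀ l, 0 ≤ θ l)
    (x y : Fin p → ℝ) :
    Summable (fun k : ℕ =>
      ((2 : ℝ) ^ k / (k.factorial : ℝ)) *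
        ∑ α ∈ Finset.Nat.antidiagonalTuple p k,
          ((k.factorial : ℝ) / ∏ l, ((α l).factorial : ℝ)) *
            (∏ l, θ l ^ α l) * (∏ l, x l ^ α l) * (∏ l, y l ^ α l))
    ∧ gaussKer θ x y =
        Real.exp (-∑ l, θ l * x l ^ 2) * Real.exp (-∑ l, θ l * y l ^ 2) *
          ∑' k : ℕ,
            ((2 : ℝ) ^ k / (k.factorial : ℝ)) *
              ∑ α ∈ Finset.Nat.antidiagonalTuple p k,
                ((k.factorial : ℝ) / ∏ l, ((α l).factorial : ℝ)) *
                  (∏ l, θ l ^ α l) * (∏ l, x l ^ α l) * (∏ l, y l ^ α l)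
    ∧ Summable (fun α : Fin p → ℕ => phiFeat θ α x ^ 2)
    ∧ (∑' α : Fin p → ℕ, phiFeat θ α x * phiFeat θ α y) = gaussKer θ x y := by
  classical
  have hterm : ∀ k : ℕ,
      ((2 : ℝ) ^ k / (k.factorial : ℝ)) *
        ∑ α ∈ Finset.Nat.antidiagonalTuple p k,
          ((k.factorial : ℝ) / ∏ l, ((α l).factorial : ℝ)) *
            (∏ l, θ l ^ α l) * (∏ l, x l ^ α l) * (∏ l, y l ^ α l)
        = (2 * ∑ l, θ l * x l * y l) ^ k / (k.factorial : ℝ) := by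
    intro k
    rw [inner_sum_eq θ x y k, mul_pow]
    ring
  have hsplit : (∑ l, θ l * (x l - y l) ^ 2)
      = (∑ l, θ l * x l ^ 2) + (∑ l, θ l * y l ^ 2) - 2 * ∑ l, θ l * x l * y l := by
    rw [Finset.mul_sum, ← Finset.sum_add_distrib, ← Finset.sum_sub_distrib]
    exact Finset.sum_congr rfl fun l _ => by ring
  have hker : gaussKer θ x y =
      Real.exp (-∑ l, θ l * x l ^ 2) * Real.exp (-∑ l, θ l * y l ^ 2) *
        Real.exp (2 * ∑ l, θ l * x l * y l) := by
    rw [gaussKer, hsplit, ← Real.exp_add, ← Real.exp_add]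
    congr 1
    ring
  have hphi : ∀ (a b : Fin p → ℝ) (α : Fin p → ℕ),
      phiFeat θ α a * phiFeat θ α b =
        (Real.exp (-∑ l, θ l * a l ^ 2) * Real.exp (-∑ l, θ l * b l ^ 2)) *
          (cAlpha θ α * (∏ l, a l ^ α l) * (∏ l, b l ^ α l)) := by
    intro a b α
    have hs := Real.mul_self_sqrt (cAlpha_nonneg hθ α)
    have h1 : ∀ a : Fin p → ℝ, phiFeat θ α a =
        Real.sqrt (cAlpha θ α) * Real.exp (-∑ l, θ l * a l ^ 2) * ∏ l, a l ^ α l :=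
      fun a => rfl
    have key : ∀ s ea eb Pa Pb : ℝ,
        (s * ea * Pa) * (s * eb * Pb) = (ea * eb) * (s * s * Pa * Pb) := by
      intros; ring
    rw [h1 a, h1 b, key, hs]
  obtain ⟨hGxx, htGxx⟩ := summable_G hθ x x
  obtain ⟨hGxy, htGxy⟩ := summable_G hθ x y
  refine ⟨(summable_congr hterm).mpr (Real.summable_pow_div_factorial _), ?_, ?_, ?_⟩
  · rw [hker, tsum_congr hterm, real_exp_tsum]
  · have h2 : ∀ α : Fin p → ℕ, phiFeat θ α x ^ 2 =
        (Real.exp (-∑ l, θ l * x l ^ 2) * Real.exp (-∑ l, θ l * x l ^ 2)) *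
          (cAlpha θ α * (∏ l, x l ^ α l) * (∏ l, x l ^ α l)) := by
      intro α
      rw [sq]
      exact hphi x x α
    exact (summable_congr h2).mpr (hGxx.mul_left _)
  · rw [tsum_congr (hphi x y), tsum_mul_left, htGxy, hker]
end

section
/- Let Ω be a p×p diagonal matrix with nonnegative diagonal entries, and let γ(z) = exp(−zᵀΩz). Then for every z ∈ ℝ^p, the Hessian of γ satisfies the Loewner-order bound ∇²γ(z) ⪯ (4/e) (max_{1≤l≤p} Ω_{ll}) I_p, i.e., (4/e)(max_l Ω_{ll}) I_p − ∇²γ(z) is positive semidefinite, where I_p is the p×p identity matrix and e is Euler's number. -/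
/-!
Write `γ = exp (-s)` with `s = ∑ ω_l z_l²` and `u = Ωz`. The Hessian is
`4γ uuᵀ - 2γ Ω`; the term `-2γ Ω` only helps, and the rank-one term is bounded by
`4γ |u|² I`. Since `|u|² = ∑ ω_l² z_l² ≤ (max ω) s`, this is at most `4 (max ω) (s e^{-s}) I`,
and `s e^{-s} ≤ 1/e`.
-/

open Matrix Real

namespace Matrix

variable {n : Type*} [Fintype n]

theorem sq_dotProduct_le_dotProduct_self_mul (v x : n → ℝ) :
    (v ⬝ᵥ x) ^ 2 ≤ (v ⬝ᵥ v) * (x ⬝ᵥ x) := by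
  simpa only [dotProduct, sq] using Finset.sum_mul_sq_le_sq_mul_sq Finset.univ v x

theorem posSemidef_smul_one_sub_smul_vecMulVec [DecidableEq n] {c k : ℝ} (v : n → ℝ)
    (hk : 0 ≤ k) (h : k * (v ⬝ᵥ v) ≤ c) :
    (c • (1 : Matrix n n ℝ) - k • vecMulVec v v).PosSemidef := by
  refine PosSemidef.of_dotProduct_mulVec_nonneg ?_ fun x => ?_
  · have hv : (vecMulVec v v).IsHermitian := by simp [IsHermitian]
    exact (isHermitian_one.smul (.all c)).sub (hv.smul (.all k))
  · have hcs := sq_dotProduct_le_dotProduct_self_mul v x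
    have hx : 0 ≤ x ⬝ᵥ x := by simpa using dotProduct_self_star_nonneg x
    simp only [star_trivial, sub_mulVec, smul_mulVec, one_mulVec, vecMulVec_mulVec,
      dotProduct_sub, dotProduct_smul, smul_eq_mul, op_smul_eq_mul, dotProduct_comm x v]
    nlinarith [mul_le_mul_of_nonneg_left hcs hk, mul_le_mul_of_nonneg_right h hx]

end Matrix

theorem mul_dotProduct_mul_le_iSup_mul_sum {ι : Type*} [Fintype ι] {ω : ι → ℝ}
    (hω : ∀ l, 0 ≤ ω l) (z : ι → ℝ) :
    (ω * z) ⬝ᵥ (ω * z) ≤ (⨆ l, ω l) * ∑ l, ω l * z l ^ 2 := by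
  rw [Finset.mul_sum]
  refine Finset.sum_le_sum fun l _ => ?_
  have hle := le_ciSup (Set.finite_range ω).bddAbove l
  calc (ω * z) l * (ω * z) l = ω l * (ω l * z l ^ 2) := by simp only [Pi.mul_apply]; ring
    _ ≤ (⨆ l, ω l) * (ω l * z l ^ 2) := by gcongr; exact mul_nonneg (hω l) (sq_nonneg _)

section GaussKernel

variable {n : Type*} [Fintype n] [DecidableEq n]

noncomputable def gaussKernelHessian (ω z : n → ℝ) : Matrix n n ℝ :=
  Matrix.of fun i j => 2 * exp (-∑ l, ω l * z l ^ 2) *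
    (2 * (ω i * z i) * (ω j * z j) - if i = j then ω i else 0)

theorem gaussKernelHessian_eq (ω z : n → ℝ) :
    gaussKernelHessian ω z = (4 * exp (-∑ l, ω l * z l ^ 2)) • vecMulVec (ω * z) (ω * z) -
      (2 * exp (-∑ l, ω l * z l ^ 2)) • diagonal ω := by
  ext i j
  by_cases h : i = j
  · subst h; simp [gaussKernelHessian, vecMulVec_apply]; ring
  · simp [gaussKernelHessian, vecMulVec_apply, h]; ring

theorem posSemidef_smul_one_sub_gaussKernelHessian {ω : n → ℝ} (hω : ∀ l, 0 ≤ ω l)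
    (z : n → ℝ) :
    ((4 / exp 1 * ⨆ l, ω l) • (1 : Matrix n n ℝ) - gaussKernelHessian ω z).PosSemidef := by
  set s := ∑ l, ω l * z l ^ 2
  have hrankOne : 4 * exp (-s) * ((ω * z) ⬝ᵥ (ω * z)) ≤ 4 / exp 1 * ⨆ l, ω l :=
    calc 4 * exp (-s) * ((ω * z) ⬝ᵥ (ω * z)) ≤ 4 * exp (-s) * ((⨆ l, ω l) * s) := by
          gcongr; exact mul_dotProduct_mul_le_iSup_mul_sum hω z
      _ = 4 * (⨆ l, ω l) * (s * exp (-s)) := by ring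
      _ ≤ 4 * (⨆ l, ω l) * exp (-1) := by
          gcongr
          · exact mul_nonneg zero_le_four (Real.iSup_nonneg hω)
          · exact mul_exp_neg_le_exp_neg_one s
      _ = 4 / exp 1 * ⨆ l, ω l := by rw [exp_neg, div_eq_mul_inv]; ring
  rw [gaussKernelHessian_eq, ← sub_add]
  exact (posSemidef_smul_one_sub_smul_vecMulVec _ (by positivity) hrankOne).add
    ((PosSemidef.diagonal hω).smul (by positivity))

end GaussKernel

theorem gauss_kernel_hessian_loewner_bound_general (p : ℕ)
    (ω : Fin p → ℝ) (hω : ∀ l, 0 ≤ ω l) (z : Fin p → ℝ) :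
    (((4 / Real.exp 1) * (⨆ l, ω l)) • (1 : Matrix (Fin p) (Fin p) ℝ)
      - Matrix.of (fun i j : Fin p =>
          2 * Real.exp (-∑ l, ω l * z l ^ 2) *
            (2 * (ω i * z i) * (ω j * z j) - if i = j then ω i else 0))).PosSemidef :=
  posSemidef_smul_one_sub_gaussKernelHessian hω z

/-- **Loewner bound on the Hessian of the Gaussian kernel.**
For a `p×p` diagonal matrix `Ω` with nonnegative diagonal entries `ω_l` and
`γ(z) = exp(-zᵀΩz)`, whose Hessian is `∇²γ(z) = 2γ(z)(2Ωz(Ωz)ᵀ - Ω)`, one has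
`∇²γ(z) ⪯ (4/e)(max_l ω_l) I_p` for every `z ∈ ℝ^p`; that is,
`(4/e)(max_l ω_l) I_p - ∇²γ(z)` is positive semidefinite. -/
theorem gauss_kernel_hessian_loewner_bound (p : ℕ) (hp : 0 < p)
    (ω : Fin p → ℝ) (hω : ∀ l, 0 ≤ ω l) (z : Fin p → ℝ) :
    (((4 / Real.exp 1) * (⨆ l, ω l)) • (1 : Matrix (Fin p) (Fin p) ℝ)
      - Matrix.of (fun i j : Fin p =>
          2 * Real.exp (-∑ l, ω l * z l ^ 2) *
            (2 * (ω i * z i) * (ω j * z j) - if i = j then ω i else 0))).PosSemidef :=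
  gauss_kernel_hessian_loewner_bound_general p ω hω z
end

section
/- (Quadratic majorization of the Gaussian kernel.) Let Ω be a p×p diagonal matrix with nonnegative diagonal entries, and let γ(z) = exp(−zᵀΩz). Then for all z, z' ∈ ℝ^p, γ(z) ≤ γ(z') − 2 γ(z') (Ωz')ᵀ(z − z') + (2/e) (max_{1≤l≤p} Ω_{ll}) ‖z − z'‖²₂, where e is Euler's number; that is, the right-hand side is a quadratic function of z that majorizes γ and touches it at z = z'. -/
/-!
Along the segment `t ↦ z' + t (z - z')` the exponent is a quadratic `q(t) = a + 2bt + ct²` with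
`c ≥ 0` and `b² ≤ ac` by the weighted Cauchy–Schwarz inequality. Hence `(b + ct)² ≤ c q(t)`, so
the second derivative `(4(b + ct)² - 2c) e^{-q}` of `e^{-q}` is at most `4c · q e^{-q} ≤ 4c/e`,
and the second-order Taylor bound between `t = 0` and `t = 1` gives the claim, using
`c ≤ (max_l ω_l) ‖z - z'‖²`.
-/

open Real Finset Set

theorem le_add_mul_add_sq_of_deriv2_le {f f' f'' : ℝ → ℝ} {B : ℝ}
    (hf : ∀ t, HasDerivAt f (f' t) t) (hf' : ∀ t, HasDerivAt f' (f'' t) t)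
    (hB : ∀ t, f'' t ≤ B) (x y : ℝ) :
    f y ≤ f x + f' x * (y - x) + B / 2 * (y - x) ^ 2 := by
  set g : ℝ → ℝ := fun t ↦ f x + f' x * (t - x) + B / 2 * (t - x) ^ 2 - f t
  set g' : ℝ → ℝ := fun t ↦ f' x + B * (t - x) - f' t
  have hg : ∀ t, HasDerivAt g (g' t) t := fun t ↦
    (((((hasDerivAt_id t).sub_const x).const_mul (f' x)).const_add (f x)).add
      ((((hasDerivAt_id t).sub_const x).pow 2).const_mul (B / 2)) |>.sub (hf t)).congr_deriv
      (by simp [g']; ring)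
  have hg' : ∀ t, HasDerivAt g' (B - f'' t) t := fun t ↦
    ((((hasDerivAt_id t).sub_const x).const_mul B).const_add (f' x) |>.sub (hf' t)).congr_deriv
      (by simp)
  have hconvex : ConvexOn ℝ univ g :=
    convexOn_of_hasDerivWithinAt2_nonneg convex_univ
      (fun t _ ↦ (hg t).differentiableAt.continuousAt.continuousWithinAt)
      (fun t _ ↦ (hg t).hasDerivWithinAt) (fun t _ ↦ (hg' t).hasDerivWithinAt)
      (fun t _ ↦ sub_nonneg.2 (hB t))
  have hmin : IsMinOn g univ x := hconvex.isMinOn_of_rightDeriv_eq_zero (by simp) <| by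
    rw [(hg x).hasDerivWithinAt.derivWithin (uniqueDiffWithinAt_Ioi x)]
    simp [g']
  simpa [g] using hmin (mem_univ y)

theorem exp_neg_quadratic_le {a b c : ℝ} (hc : 0 ≤ c) (hbac : b ^ 2 ≤ a * c) :
    exp (-(a + 2 * b + c)) ≤ exp (-a) - 2 * b * exp (-a) + 2 * c / exp 1 := by
  set q : ℝ → ℝ := fun t ↦ a + 2 * b * t + c * t ^ 2
  have hq : ∀ t, HasDerivAt q (2 * (b + c * t)) t := fun t ↦
    ((((hasDerivAt_id t).const_mul (2 * b)).const_add a).add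
      ((hasDerivAt_pow 2 t).const_mul c)).congr_deriv (by simp; ring)
  have hf : ∀ t, HasDerivAt (fun t ↦ exp (-q t)) (-(2 * (b + c * t)) * exp (-q t)) t :=
    fun t ↦ ((hq t).neg.exp).congr_deriv (mul_comm _ _)
  have hf' : ∀ t, HasDerivAt (fun t ↦ -(2 * (b + c * t)) * exp (-q t))
      ((4 * (b + c * t) ^ 2 - 2 * c) * exp (-q t)) t := fun t ↦
    (((((hasDerivAt_id t).const_mul c).const_add b).const_mul 2).neg.mul (hf t)).congr_deriv
      (by simp; ring)
  have hf'_le : ∀ t, (4 * (b + c * t) ^ 2 - 2 * c) * exp (-q t) ≤ 4 * c * exp (-1) := by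
    intro t
    have hcs : (b + c * t) ^ 2 ≤ c * q t := by
      linarith [show c * q t - (b + c * t) ^ 2 = a * c - b ^ 2 by ring]
    calc (4 * (b + c * t) ^ 2 - 2 * c) * exp (-q t)
        ≤ 4 * (c * q t) * exp (-q t) := by gcongr; linarith
      _ = 4 * c * (q t * exp (-q t)) := by ring
      _ ≤ 4 * c * exp (-1) := by gcongr; exact mul_exp_neg_le_exp_neg_one _
  calc exp (-(a + 2 * b + c)) = exp (-q 1) := by simp [q]
    _ ≤ exp (-q 0) + -(2 * (b + c * 0)) * exp (-q 0) * (1 - 0)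
          + 4 * c * exp (-1) / 2 * (1 - 0) ^ 2 :=
      le_add_mul_add_sq_of_deriv2_le hf hf' hf'_le 0 1
    _ = exp (-a) - 2 * b * exp (-a) + 2 * c / exp 1 := by simp [q, exp_neg 1]; ring

theorem gauss_kernel_quadratic_majorization_general (p : ℕ)
    (ω : Fin p → ℝ) (hω : ∀ l, 0 ≤ ω l) (z z' : Fin p → ℝ) :
    Real.exp (-∑ l, ω l * z l ^ 2) ≤
      Real.exp (-∑ l, ω l * z' l ^ 2)
        - 2 * Real.exp (-∑ l, ω l * z' l ^ 2) * ∑ l, ω l * z' l * (z l - z' l)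
        + (2 / Real.exp 1) * (⨆ l, ω l) * ∑ l, (z l - z' l) ^ 2 := by
  set a := ∑ l, ω l * z' l ^ 2
  set b := ∑ l, ω l * z' l * (z l - z' l)
  set c := ∑ l, ω l * (z l - z' l) ^ 2
  have hc : 0 ≤ c := sum_nonneg fun l _ ↦ mul_nonneg (hω l) (sq_nonneg _)
  have hbac : b ^ 2 ≤ a * c :=
    sum_sq_le_sum_mul_sum_of_sq_le_mul _ (fun l _ ↦ mul_nonneg (hω l) (sq_nonneg _))
      (fun l _ ↦ mul_nonneg (hω l) (sq_nonneg _)) (fun l _ ↦ le_of_eq (by ring))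
  have hsplit : ∑ l, ω l * z l ^ 2 = a + 2 * b + c := by
    simp only [a, b, c, mul_sum, ← sum_add_distrib]
    exact sum_congr rfl fun l _ ↦ by ring
  have hc_le : c ≤ (⨆ l, ω l) * ∑ l, (z l - z' l) ^ 2 := by
    rw [mul_sum]
    exact sum_le_sum fun l _ ↦ mul_le_mul_of_nonneg_right
      (le_ciSup (finite_range ω).bddAbove l) (sq_nonneg _)
  rw [hsplit]
  calc exp (-(a + 2 * b + c)) ≤ exp (-a) - 2 * b * exp (-a) + 2 / exp 1 * c := by
        simpa only [mul_div_right_comm] using exp_neg_quadratic_le hc hbac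
    _ ≤ _ := by linarith [mul_le_mul_of_nonneg_left hc_le (by positivity : 0 ≤ 2 / exp 1)]

/-- **Quadratic majorization of the Gaussian kernel.**
For a `p×p` diagonal matrix `Ω` with nonnegative diagonal entries `ω_l` and
`γ(z) = exp(-zᵀΩz)`, for all `z, z' ∈ ℝ^p`:
`γ(z) ≤ γ(z') - 2γ(z')(Ωz')ᵀ(z - z') + (2/e)(max_l ω_l)‖z - z'‖₂²`,
a quadratic function of `z` which majorizes `γ` and touches it at `z = z'`. -/
theorem gauss_kernel_quadratic_majorization (p : ℕ) (hp : 0 < p)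
    (ω : Fin p → ℝ) (hω : ∀ l, 0 ≤ ω l) (z z' : Fin p → ℝ) :
    Real.exp (-∑ l, ω l * z l ^ 2) ≤
      Real.exp (-∑ l, ω l * z' l ^ 2)
        - 2 * Real.exp (-∑ l, ω l * z' l ^ 2) * ∑ l, ω l * z' l * (z l - z' l)
        + (2 / Real.exp 1) * (⨆ l, ω l) * ∑ l, (z l - z' l) ^ 2 :=
  gauss_kernel_quadratic_majorization_general p ω hω z z'
end
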